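/- The closed unit ball of ℓ¹, endowed with the weak topology, does not have the Pytkeev property. -/

import Mathlib

/-!
Let `A = {(e j - e k) / 2 : j < k}` in the unit ball of `ℓ¹`. Finitely many functionals map the
bounded sequence `e n / 2` into a finite-dimensional space, where two of its terms are close, so
`0` lies in the weak closure of `A` but not in `A`. Given infinite sets `S n ⊆ A`, choose
`(e (j n) - e (k n)) / 2 ∈ S n` with `k` strictly increasing. The edges `(j n, k n)` then form a
forest, so some `c : ℕ → Bool` separates the ends of every edge, and the functional
`x ↦ ∑_{c i} x i` given by `c ∈ ℓ^∞` has absolute value `1/2` at a point of every `S n`. Hence the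
weak neighbourhood `{x | |∑_{c i} x i| < 1/2}` of `0` contains no `S n`.
-/

open Filter Topology Set

noncomputable section

/-- The Banach space `ℓ¹` of absolutely summable real sequences. -/
abbrev ellOne : Type := lp (fun _ : ℕ => ℝ) 1

/-- The closed unit ball of `ℓ¹` endowed with the weak topology (subspace topology from
`σ(ℓ¹, ℓ^∞)`). -/
abbrev BallW : Type :=
  {x : WeakSpace ℝ ellOne // ‖(toWeakSpace ℝ ellOne).symm x‖ ≤ 1}

/-- `X` has the Pytkeev property. -/
def PytkeevSpace (X : Type*) [TopologicalSpace X] : Prop :=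
  ∀ (A : Set X) (x : X), x ∈ closure A \ A →
    ∃ S : ℕ → Set X, (∀ n, S n ⊆ A ∧ (S n).Infinite) ∧
      ∀ U ∈ nhds x, ∃ n, S n ⊆ U

open scoped ENNReal

theorem exists_lt_dist_lt_of_isBounded_range {X : Type*} [PseudoMetricSpace X] [ProperSpace X]
    {x : ℕ → X} (hx : Bornology.IsBounded (range x)) {ε : ℝ} (hε : 0 < ε) :
    ∃ j k, j < k ∧ dist (x j) (x k) < ε := by
  obtain ⟨_, _, φ, hφ, hlim⟩ := tendsto_subseq_of_bounded hx (mem_range_self ·)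
  obtain ⟨N, hN⟩ := Metric.cauchySeq_iff'.1 hlim.cauchySeq ε hε
  exact ⟨φ N, φ (N + 1), hφ N.lt_succ_self, by rw [dist_comm]; exact hN (N + 1) N.le_succ⟩

section WeakClosure

variable {𝕜 E : Type*} [NontriviallyNormedField 𝕜] [NormedAddCommGroup E] [NormedSpace 𝕜 E]

theorem exists_lt_forall_norm_apply_sub_lt [ProperSpace 𝕜] {u : ℕ → E}
    (hu : Bornology.IsBounded (range u)) (s : Finset (StrongDual 𝕜 E)) {ε : ℝ} (hε : 0 < ε) :
    ∃ j k, j < k ∧ ∀ g ∈ s, ‖g (u j - u k)‖ < ε := by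
  let L : E →L[𝕜] (s → 𝕜) := ContinuousLinearMap.pi fun g => g.1
  have hLu : Bornology.IsBounded (range (L ∘ u)) := by
    rw [range_comp]; exact L.lipschitz.isBounded_image hu
  obtain ⟨j, k, hjk, hdist⟩ := exists_lt_dist_lt_of_isBounded_range hLu hε
  refine ⟨j, k, hjk, fun g hg => ?_⟩
  rw [map_sub, ← dist_eq_norm]
  exact (dist_le_pi_dist (L (u j)) (L (u k)) ⟨g, hg⟩).trans_lt hdist

theorem zero_mem_closure_toWeakSpace_sub [ProperSpace 𝕜] {u : ℕ → E}
    (hu : Bornology.IsBounded (range u)) :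
    (0 : WeakSpace 𝕜 E) ∈
      closure ((fun p : ℕ × ℕ => toWeakSpace 𝕜 E (u p.1 - u p.2)) '' {p | p.1 < p.2}) := by
  refine (mem_closure_iff_nhds_basis (X := WeakSpace 𝕜 E)
    (LinearMap.weakBilin_withSeminorms (topDualPairing 𝕜 E).flip).hasBasis_zero_ball).2 ?_
  rintro ⟨s, ε⟩ (hε : 0 < ε)
  obtain ⟨j, k, hjk, hsmall⟩ := exists_lt_forall_norm_apply_sub_lt hu s hε
  refine ⟨_, mem_image_of_mem _ (show (j, k).1 < (j, k).2 from hjk), ?_⟩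
  exact (Seminorm.mem_ball_zero _).2 (Seminorm.finset_sup_apply_lt hε hsmall)

theorem continuous_apply_toWeakSpace_symm (g : StrongDual 𝕜 E) :
    Continuous fun x : WeakSpace 𝕜 E => g ((toWeakSpace 𝕜 E).symm x) :=
  WeakBilin.eval_continuous _ g

end WeakClosure

theorem frequently_exists_lt_mem_of_infinite {α : Type*} {w : ℕ → ℕ → α} {T : Set α}
    (hTw : T ⊆ (fun p : ℕ × ℕ => w p.1 p.2) '' {p | p.1 < p.2}) (hT : T.Infinite) :
    ∃ᶠ k in atTop, ∃ j < k, w j k ∈ T := by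
  rw [frequently_atTop]
  intro N
  by_contra! hbound
  refine hT (((finite_Iio N).prod (finite_Iio N)).image (fun p => w p.1 p.2) |>.subset ?_)
  intro x hx
  obtain ⟨⟨j, k⟩, hjk, rfl⟩ := hTw hx
  have hkN : k < N := by
    by_contra! hNk
    exact hbound k hNk j hjk hx
  exact ⟨(j, k), ⟨(hjk : j < k).trans hkN, hkN⟩, rfl⟩

-- Each `k n` lies above `j n` and, `k` being injective, is the top of only one edge, so the
-- edges form a forest; colour `k n` opposite to `j n`, by recursion on the vertex.
open Classical in
def forestColoring (j k : ℕ → ℕ) (hjk : ∀ n, j n < k n) : ℕ → Bool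
  | i => if h : ∃ n, k n = i then !forestColoring j k hjk (j h.choose) else false
termination_by i => i
decreasing_by exact (hjk _).trans_eq h.choose_spec

theorem forestColoring_ne {j k : ℕ → ℕ} (hjk : ∀ n, j n < k n) (hk : k.Injective)
    (n : ℕ) : forestColoring j k hjk (j n) ≠ forestColoring j k hjk (k n) := by
  have h : ∃ m, k m = k n := ⟨n, rfl⟩
  conv_rhs => rw [forestColoring, dif_pos h, hk h.choose_spec]
  exact Bool.ne_not.2 rfl

def boolDual (c : ℕ → Bool) : StrongDual ℝ ellOne :=
  lp.dualPairing ∞ 1 (fun _ => ContinuousLinearMap.mul ℝ ℝ) (K := 1) (fun _ => by simp)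
    ⟨fun i => if c i then 1 else 0,
      memℓp_infty ⟨1, by rintro _ ⟨i, rfl⟩; dsimp only; split_ifs <;> simp⟩⟩

theorem boolDual_single (c : ℕ → Bool) (i : ℕ) (a : ℝ) :
    boolDual c (lp.single 1 i a) = if c i then a else 0 := by
  change ∑' m, (if c m then (1 : ℝ) else 0) * (lp.single 1 i a : ellOne) m = _
  rw [tsum_eq_single i]
  · cases c i <;> simp
  · intro m hm; simp [hm]

def halfSingle (n : ℕ) : ellOne := lp.single 1 n 2⁻¹

theorem norm_halfSingle (n : ℕ) : ‖halfSingle n‖ = 2⁻¹ := by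
  simp [halfSingle]

theorem isBounded_range_halfSingle : Bornology.IsBounded (range halfSingle) :=
  isBounded_iff_forall_norm_le.2 ⟨2⁻¹, by rintro _ ⟨n, rfl⟩; exact (norm_halfSingle n).le⟩

theorem norm_halfSingle_sub_le (j k : ℕ) : ‖halfSingle j - halfSingle k‖ ≤ 1 :=
  (norm_sub_le _ _).trans_eq (by rw [norm_halfSingle, norm_halfSingle]; norm_num)

theorem abs_boolDual_halfSingle_sub {c : ℕ → Bool} {j k : ℕ} (h : c j ≠ c k) :
    |boolDual c (halfSingle j - halfSingle k)| = 2⁻¹ := by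
  rw [map_sub, halfSingle, halfSingle, boolDual_single, boolDual_single]
  cases hj : c j <;> cases hk : c k <;> simp_all

def ballDiff (j k : ℕ) : BallW :=
  ⟨toWeakSpace ℝ ellOne (halfSingle j - halfSingle k), norm_halfSingle_sub_le j k⟩

def ballDiffSet : Set BallW := (fun p : ℕ × ℕ => ballDiff p.1 p.2) '' {p | p.1 < p.2}

def ballZero : BallW := ⟨0, by simp⟩

theorem ballZero_mem_closure_ballDiffSet : ballZero ∈ closure ballDiffSet := by
  rw [closure_subtype, ballDiffSet, image_image]
  exact zero_mem_closure_toWeakSpace_sub isBounded_range_halfSingle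

theorem ballZero_notMem_ballDiffSet : ballZero ∉ ballDiffSet := by
  rintro ⟨⟨j, k⟩, hjk, h⟩
  have := congrArg (fun x : BallW => ((toWeakSpace ℝ ellOne).symm x.1 : ℕ → ℝ) j) h
  simp [ballZero, ballDiff, halfSingle, (show j < k from hjk).ne] at this

/-- Proposition 3.3: the closed unit ball of `ℓ¹` with the weak topology does not have the
Pytkeev property. -/
theorem ball_ellOne_weak_not_pytkeev : ¬ PytkeevSpace BallW := by
  intro h
  obtain ⟨S, hSA, hS⟩ :=
    h ballDiffSet ballZero ⟨ballZero_mem_closure_ballDiffSet, ballZero_notMem_ballDiffSet⟩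
  obtain ⟨k, hk, hjS⟩ := extraction_forall_of_frequently fun n =>
    frequently_exists_lt_mem_of_infinite (hSA n).1 (hSA n).2
  choose j hjk hjS using hjS
  set g := boolDual (forestColoring j k hjk)
  have hU : {x : BallW | |g ((toWeakSpace ℝ ellOne).symm x.1)| < 2⁻¹} ∈ 𝓝 ballZero :=
    (isOpen_lt ((continuous_apply_toWeakSpace_symm g).comp continuous_subtype_val).abs
      continuous_const).mem_nhds (by simp [ballZero])
  obtain ⟨n, hn⟩ := hS _ hU
  have hlt : |g (halfSingle (j n) - halfSingle (k n))| < 2⁻¹ := hn (hjS n)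
  rw [abs_boolDual_halfSingle_sub (forestColoring_ne hjk hk.injective n)] at hlt
  exact lt_irrefl _ hlt
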